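/- Let x₀ ∈ ℝⁿ \ closure(ch(Ω)) with Ω bounded open with smooth boundary, φ(x) = log|x−x₀|, ψ(x) = d_{S^{n−1}}((x−x₀)/|x−x₀|, ω), A a C² real vector field and q ∈ L^∞(Ω). Suppose Φ is a C² solution on Ω of (∇φ + i∇ψ)·∇Φ + i(∇φ + i∇ψ)·A + (1/2)Δ(φ + iψ) = 0. Then a = e^Φ satisfies the transport equation (D+A)·(∇ψ − i∇φ)a + (∇ψ − i∇φ)·(D+A)a = 0, and consequently h² L_{A,q}( e^{(φ+iψ)/h} e^Φ ) = O(h²) e^{φ/h} in L²(Ω) as h → 0. -/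

import Mathlib

open MeasureTheory Complex
open scoped RealInnerProductSpace

noncomputable section

abbrev En (n : ℕ) := EuclideanSpace ℝ (Fin n)

def pd {n : ℕ} (j : Fin n) (f : En n → ℂ) (x : En n) : ℂ :=
  fderiv ℝ f x (EuclideanSpace.single j 1)

def pdR {n : ℕ} (j : Fin n) (f : En n → ℝ) (x : En n) : ℝ :=
  fderiv ℝ f x (EuclideanSpace.single j 1)

/-- Magnetic Schrödinger operator `L_{A,q} = Σ_j (D_j + A_j)² + q`, `D = -i∇`. -/
def Lmag {n : ℕ} (A : En n → En n) (q : En n → ℂ) (u : En n → ℂ) (x : En n) : ℂ :=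
  -(∑ j, pd j (pd j u) x) - 2 * I * (∑ j, (A x j : ℂ) * pd j u x)
    - I * (∑ j, (pdR j (fun y => A y j) x : ℂ)) * u x
    + (((∑ j, (A x j) ^ 2 : ℝ) : ℂ) + q x) * u x

variable {n : ℕ} {j : Fin n} {f g : En n → ℂ} {x : En n}

lemma pd_congr {g} (h : f =ᶠ[nhds x] g) : pd j f x = pd j g x := by
  rw [pd, h.fderiv_eq]; rfl

lemma pdR_congr {f g : En n → ℝ} (h : f =ᶠ[nhds x] g) : pdR j f x = pdR j g x := by
  rw [pdR, h.fderiv_eq]; rfl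

lemma pd_add (hf : DifferentiableAt ℝ f x) (hg : DifferentiableAt ℝ g x) :
    pd j (fun y => f y + g y) x = pd j f x + pd j g x := by
  rw [pd, fderiv_fun_add hf hg]; rfl

lemma pd_mul (hf : DifferentiableAt ℝ f x) (hg : DifferentiableAt ℝ g x) :
    pd j (fun y => f y * g y) x = pd j f x * g x + f x * pd j g x := by
  rw [pd, fderiv_fun_mul hf hg]
  simp [pd]
  ring

lemma pd_exp (hf : DifferentiableAt ℝ f x) :
    pd j (fun y => Complex.exp (f y)) x = Complex.exp (f x) * pd j f x := by
  rw [pd, (hf.hasFDerivAt.cexp).fderiv]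
  simp [pd, smul_eq_mul]

lemma pd_ofReal {f : En n → ℝ} (hf : DifferentiableAt ℝ f x) :
    pd j (fun y => (f y : ℂ)) x = (pdR j f x : ℂ) := by
  have : HasFDerivAt (fun y => ((f y : ℝ) : ℂ)) (Complex.ofRealCLM.comp (fderiv ℝ f x)) x :=
    (Complex.ofRealCLM.hasFDerivAt).comp x hf.hasFDerivAt
  rw [pd, this.fderiv]
  simp [pdR]

lemma pd_const_mul (c : ℂ) (hf : DifferentiableAt ℝ f x) :
    pd j (fun y => c * f y) x = c * pd j f x := by
  rw [pd, fderiv_const_mul hf]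
  simp [pd]

lemma pd_div_const (c : ℂ) (hf : DifferentiableAt ℝ f x) :
    pd j (fun y => f y / c) x = pd j f x / c := by
  simp only [div_eq_inv_mul, pd_const_mul c⁻¹ hf]

section Geo

variable (x₀ ω : En n)

lemma hasFDerivAt_s2 (x : En n) :
    HasFDerivAt (fun y : En n => ‖y - x₀‖ ^ 2) (2 • innerSL ℝ (x - x₀)) x := by
  have h := ((hasFDerivAt_id x).sub_const x₀).norm_sq
  simpa using h

lemma hasFDerivAt_t (x : En n) :
    HasFDerivAt (fun y : En n => ⟪ω, y - x₀⟫) (innerSL ℝ ω) x := by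
  have h := (innerSL ℝ ω).hasFDerivAt.comp x ((hasFDerivAt_id x).sub_const x₀)
  exact h

lemma hasFDerivAt_lognorm (x : En n) (hx : x ≠ x₀) :
    HasFDerivAt (fun y : En n => Real.log ‖y - x₀‖)
      ((‖x - x₀‖ ^ 2)⁻¹ • innerSL ℝ (x - x₀)) x := by
  have hw : x - x₀ ≠ 0 := sub_ne_zero.mpr hx
  have hw' : (0:ℝ) < ‖x - x₀‖ := norm_pos_iff.mpr hw
  have hs : (0:ℝ) < ‖x - x₀‖ ^ 2 := by positivity
  have h2 : HasFDerivAt (fun y : En n => Real.log (‖y - x₀‖ ^ 2))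
      ((‖x - x₀‖ ^ 2)⁻¹ • (2 • innerSL ℝ (x - x₀))) x := by
    have h := (Real.hasDerivAt_log hs.ne').comp_hasFDerivAt x (hasFDerivAt_s2 x₀ x)
    exact h
  have heq : (fun y : En n => Real.log ‖y - x₀‖)
      = fun y : En n => (1/2 : ℝ) * Real.log (‖y - x₀‖ ^ 2) := by
    funext y; rw [Real.log_pow]; push_cast; ring
  rw [heq]
  have h3 := h2.const_mul (1/2 : ℝ)
  refine h3.congr_fderiv (Eq.symm ?_)
  ext v
  simp only [ContinuousLinearMap.smul_apply, smul_eq_mul, two_smul,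
    ContinuousLinearMap.add_apply]
  ring

lemma hasFDerivAt_psi (x : En n)
    (hQ : 0 < ‖x - x₀‖ ^ 2 - ⟪ω, x - x₀⟫ ^ 2) :
    HasFDerivAt (fun y : En n => Real.pi / 2 -
        Real.arctan (⟪ω, y - x₀⟫ / Real.sqrt (‖y - x₀‖ ^ 2 - ⟪ω, y - x₀⟫ ^ 2)))
      ((⟪ω, x - x₀⟫ / (‖x - x₀‖ ^ 2 * Real.sqrt (‖x - x₀‖ ^ 2 - ⟪ω, x - x₀⟫ ^ 2)))
          • innerSL ℝ (x - x₀)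
        - (Real.sqrt (‖x - x₀‖ ^ 2 - ⟪ω, x - x₀⟫ ^ 2))⁻¹ • innerSL ℝ ω) x := by
  have hs : (0:ℝ) < ‖x - x₀‖ ^ 2 := by nlinarith [sq_nonneg (⟪ω, x - x₀⟫ : ℝ)]
  set s : ℝ := ‖x - x₀‖ ^ 2 with hs_def
  set t : ℝ := ⟪ω, x - x₀⟫ with ht_def
  set Q : ℝ := Real.sqrt (s - t ^ 2) with hQ_def
  have hQpos : 0 < Q := Real.sqrt_pos.mpr hQ
  have hQsq : Q ^ 2 = s - t ^ 2 := Real.sq_sqrt hQ.le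
  have h_t2 : HasFDerivAt (fun y : En n => ⟪ω, y - x₀⟫ ^ 2)
      ((2 * t) • innerSL ℝ ω) x := by
    have h := (hasFDerivAt_t x₀ ω x).mul (hasFDerivAt_t x₀ ω x)
    have h2 : (fun y : En n => ⟪ω, y - x₀⟫ ^ 2)
        = fun y : En n => ⟪ω, y - x₀⟫ * ⟪ω, y - x₀⟫ := by
      funext y; ring
    rw [h2, show ((2 : ℝ) * t) • innerSL ℝ ω
      = t • innerSL ℝ ω + t • innerSL ℝ ω by rw [two_mul, add_smul]]
    exact h
  have h_q : HasFDerivAt (fun y : En n => ‖y - x₀‖ ^ 2 - ⟪ω, y - x₀⟫ ^ 2)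
      (2 • innerSL ℝ (x - x₀) - (2 * t) • innerSL ℝ ω) x :=
    (hasFDerivAt_s2 x₀ x).sub h_t2
  have h_Q : HasFDerivAt (fun y : En n => Real.sqrt (‖y - x₀‖ ^ 2 - ⟪ω, y - x₀⟫ ^ 2))
      ((1 / (2 * Q)) • (2 • innerSL ℝ (x - x₀) - (2 * t) • innerSL ℝ ω)) x := by
    have h := (Real.hasDerivAt_sqrt hQ.ne').comp_hasFDerivAt x h_q
    exact h
  have h_inv : HasFDerivAt
      (fun y : En n => (Real.sqrt (‖y - x₀‖ ^ 2 - ⟪ω, y - x₀⟫ ^ 2))⁻¹)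
      ((-(Q ^ 2)⁻¹) • ((1 / (2 * Q)) • (2 • innerSL ℝ (x - x₀) - (2 * t) • innerSL ℝ ω))) x := by
    have h := (hasDerivAt_inv hQpos.ne').comp_hasFDerivAt x h_Q
    exact h
  have h_G : HasFDerivAt
      (fun y : En n => ⟪ω, y - x₀⟫ / Real.sqrt (‖y - x₀‖ ^ 2 - ⟪ω, y - x₀⟫ ^ 2))
      (t • ((-(Q ^ 2)⁻¹) • ((1 / (2 * Q)) • (2 • innerSL ℝ (x - x₀) - (2 * t) • innerSL ℝ ω)))
        + (Q⁻¹ • innerSL ℝ ω)) x := by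
    have h := (hasFDerivAt_t x₀ ω x).mul h_inv
    have h2 : (fun y : En n => ⟪ω, y - x₀⟫ / Real.sqrt (‖y - x₀‖ ^ 2 - ⟪ω, y - x₀⟫ ^ 2))
        = fun y : En n => ⟪ω, y - x₀⟫ * (Real.sqrt (‖y - x₀‖ ^ 2 - ⟪ω, y - x₀⟫ ^ 2))⁻¹ := by
      funext y; rw [div_eq_mul_inv]
    rw [h2]
    exact h
  have h_at := (Real.hasDerivAt_arctan (t / Q)).comp_hasFDerivAt x h_G
  have h_main := h_at.const_sub (Real.pi / 2)
  refine h_main.congr_fderiv (Eq.symm ?_)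
  have h1G : 1 + (t / Q) ^ 2 = s / Q ^ 2 := by
    field_simp
    nlinarith
  ext v
  simp only [ContinuousLinearMap.coe_sub', Pi.sub_apply, ContinuousLinearMap.smul_apply,
    ContinuousLinearMap.neg_apply, ContinuousLinearMap.add_apply, smul_eq_mul, two_smul]
  rw [h1G]
  set a : ℝ := innerSL ℝ (x - x₀) v
  set b : ℝ := innerSL ℝ ω v
  have hQ2 : Q ^ 2 = s - t ^ 2 := hQsq
  have hQ3 : Q ^ 2 = ‖x - x₀‖ ^ 2 - t ^ 2 := hQ2
  field_simp
  ring_nf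
  linear_combination (2 * b) * hQ3

end Geo

section Geo2

variable (x₀ ω : En n)

lemma inner_single_one (v : En n) (j : Fin n) :
    ⟪v, EuclideanSpace.single j (1:ℝ)⟫ = v j := by
  rw [show ((1:ℝ)) = ((1:ℝ) : ℝ) from rfl, EuclideanSpace.inner_single_right]
  simp

lemma contDiffAt_lognorm (x : En n) (hx : x ≠ x₀) :
    ContDiffAt ℝ 3 (fun y : En n => Real.log ‖y - x₀‖) x := by
  have hw : x - x₀ ≠ 0 := sub_ne_zero.mpr hx
  have h1 : ContDiffAt ℝ 3 (fun y : En n => ‖y - x₀‖) x :=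
    ((contDiffAt_id (x := x)).sub contDiffAt_const).norm ℝ hw
  exact (Real.contDiffAt_log.mpr (norm_ne_zero_iff.mpr hw)).comp x h1

lemma contDiffAt_psifun (x : En n)
    (hQ : 0 < ‖x - x₀‖ ^ 2 - ⟪ω, x - x₀⟫ ^ 2) :
    ContDiffAt ℝ 3 (fun y : En n => Real.pi / 2 -
      Real.arctan (⟪ω, y - x₀⟫ / Real.sqrt (‖y - x₀‖ ^ 2 - ⟪ω, y - x₀⟫ ^ 2))) x := by
  have ht : ContDiffAt ℝ 3 (fun y : En n => (⟪ω, y - x₀⟫ : ℝ)) x :=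
    (ContDiff.inner ℝ contDiff_const (contDiff_id.sub contDiff_const)).contDiffAt
  have hs2 : ContDiffAt ℝ 3 (fun y : En n => ‖y - x₀‖ ^ 2) x :=
    ((contDiff_id.sub contDiff_const).norm_sq ℝ).contDiffAt
  have hq : ContDiffAt ℝ 3 (fun y : En n => ‖y - x₀‖ ^ 2 - ⟪ω, y - x₀⟫ ^ 2) x :=
    hs2.sub (ht.pow 2)
  have hsq : ContDiffAt ℝ 3
      (fun y : En n => Real.sqrt (‖y - x₀‖ ^ 2 - ⟪ω, y - x₀⟫ ^ 2)) x :=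
    (Real.contDiffAt_sqrt hQ.ne').comp x hq
  have hG : ContDiffAt ℝ 3
      (fun y : En n => ⟪ω, y - x₀⟫ / Real.sqrt (‖y - x₀‖ ^ 2 - ⟪ω, y - x₀⟫ ^ 2)) x :=
    ht.div hsq (Real.sqrt_pos.mpr hQ).ne'
  exact contDiffAt_const.sub ((Real.contDiff_arctan.contDiffAt).comp x hG)

lemma strictCS (hω : ‖ω‖ = 1) (x : En n) (hx : x ≠ x₀)
    (h1 : ‖x - x₀‖⁻¹ • (x - x₀) ≠ ω) (h2 : ‖x - x₀‖⁻¹ • (x - x₀) ≠ -ω) :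
    0 < ‖x - x₀‖ ^ 2 - ⟪ω, x - x₀⟫ ^ 2 := by
  have hw : x - x₀ ≠ 0 := sub_ne_zero.mpr hx
  have hwp : (0:ℝ) < ‖x - x₀‖ := norm_pos_iff.mpr hw
  by_contra hcon
  push_neg at hcon
  have hle : |⟪ω, x - x₀⟫| ≤ ‖ω‖ * ‖x - x₀‖ := abs_real_inner_le_norm ω (x - x₀)
  rw [hω, one_mul] at hle
  have habs : |⟪ω, x - x₀⟫| = ‖x - x₀‖ := by nlinarith [abs_nonneg (⟪ω, x - x₀⟫ : ℝ), _root_.sq_abs (⟪ω, x - x₀⟫ : ℝ)]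
  rcases abs_eq (norm_nonneg _) |>.mp habs with heq | heq
  · -- ⟪ω, x-x₀⟫ = ‖x-x₀‖ = ‖ω‖ * ‖x-x₀‖
    have : ‖x - x₀‖ • ω = ‖ω‖ • (x - x₀) := by
      refine inner_eq_norm_mul_iff_real.mp ?_
      rw [hω, one_mul]; exact heq
    rw [hω, one_smul] at this
    apply h1
    have h3 := congrArg (fun v : En n => ‖x - x₀‖⁻¹ • v) this.symm
    simpa [smul_smul, inv_mul_cancel₀ hwp.ne'] using h3
  · -- ⟪ω, x-x₀⟫ = -‖x-x₀‖ ; then ⟪ω, -(x-x₀)⟫ = ‖-(x-x₀)‖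
    have heq2 : (⟪ω, -(x - x₀)⟫ : ℝ) = ‖ω‖ * ‖-(x - x₀)‖ := by
      rw [inner_neg_right, heq, hω, one_mul, norm_neg, neg_neg]
    have : ‖ω‖ • (-(x - x₀)) = ‖-(x - x₀)‖ • ω := by
      exact (inner_eq_norm_mul_iff_real.mp heq2).symm
    rw [hω, one_smul, norm_neg] at this
    apply h2
    have hxx : x - x₀ = -(‖x - x₀‖ • ω) := neg_eq_iff_eq_neg.mp this
    have h3 := congrArg (fun v : En n => ‖x - x₀‖⁻¹ • v) hxx
    simpa [smul_smul, inv_mul_cancel₀ hwp.ne'] using h3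

end Geo2

section Eikonal

lemma sum_mul_self_eq (v w : En n) : ∑ j, v j * w j = ⟪v, w⟫ := by
  rw [PiLp.inner_apply]
  simp [RCLike.inner_apply]
  exact Finset.sum_congr rfl fun _ _ => mul_comm _ _

lemma eikonal_scalar (S T Qr : ℝ) (hS : 0 < S) (hQr : 0 < Qr)
    (hQsq : Qr ^ 2 = S - T ^ 2) (w o : Fin n → ℝ)
    (hww : ∑ j, w j * w j = S) (how : ∑ j, o j * w j = T)
    (hoo : ∑ j, o j * o j = 1) :
    ∑ j, (((w j / S : ℝ) : ℂ)
      + I * ((T * w j / (S * Qr) - o j / Qr : ℝ) : ℂ)) ^ 2 = 0 := by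
  have hSC : ((S : ℝ) : ℂ) ≠ 0 := by exact_mod_cast hS.ne'
  have hQC : ((Qr : ℝ) : ℂ) ≠ 0 := by exact_mod_cast hQr.ne'
  have hQsqC : ((Qr : ℝ) : ℂ) ^ 2 = (S : ℂ) - (T : ℂ) ^ 2 := by exact_mod_cast hQsq
  set a : ℂ := 1 / (S : ℂ) + I * ((T : ℂ) / ((S : ℂ) * (Qr : ℂ))) with ha_def
  set b : ℂ := -I * ((Qr : ℂ))⁻¹ with hb_def
  have key : ∀ j, (((w j / S : ℝ) : ℂ)
      + I * ((T * w j / (S * Qr) - o j / Qr : ℝ) : ℂ)) ^ 2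
      = a ^ 2 * ((w j * w j : ℝ) : ℂ)
        + (2 * a * b) * ((o j * w j : ℝ) : ℂ)
        + b ^ 2 * ((o j * o j : ℝ) : ℂ) := by
    intro j
    have lin : (((w j / S : ℝ) : ℂ)
        + I * ((T * w j / (S * Qr) - o j / Qr : ℝ) : ℂ)) = a * (w j : ℂ) + b * (o j : ℂ) := by
      rw [ha_def, hb_def]
      push_cast
      field_simp
      ring
    rw [lin, ha_def, hb_def]
    push_cast
    ring
  rw [Finset.sum_congr rfl (fun j _ => key j)]
  rw [Finset.sum_add_distrib, Finset.sum_add_distrib, ← Finset.mul_sum, ← Finset.mul_sum,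
    ← Finset.mul_sum, ← Complex.ofReal_sum, ← Complex.ofReal_sum, ← Complex.ofReal_sum,
    hww, how, hoo]
  rw [ha_def, hb_def]
  push_cast
  field_simp
  linear_combination hQsqC + ((S:ℂ) - (T:ℂ) ^ 2) * Complex.I_sq

lemma eikonal (x₀ ω : En n) (hω : ‖ω‖ = 1) (x : En n) (hx : x ≠ x₀)
    (hQ : 0 < ‖x - x₀‖ ^ 2 - ⟪ω, x - x₀⟫ ^ 2) :
    ∑ j, ((((x - x₀) j / ‖x - x₀‖ ^ 2 : ℝ) : ℂ)
      + I * ((⟪ω, x - x₀⟫ * (x - x₀) j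
          / (‖x - x₀‖ ^ 2 * Real.sqrt (‖x - x₀‖ ^ 2 - ⟪ω, x - x₀⟫ ^ 2))
        - ω j / Real.sqrt (‖x - x₀‖ ^ 2 - ⟪ω, x - x₀⟫ ^ 2) : ℝ) : ℂ)) ^ 2 = 0 := by
  have hw : x - x₀ ≠ 0 := sub_ne_zero.mpr hx
  have hwp : (0:ℝ) < ‖x - x₀‖ := norm_pos_iff.mpr hw
  have hs : (0:ℝ) < ‖x - x₀‖ ^ 2 := by positivity
  refine eikonal_scalar (‖x - x₀‖ ^ 2) (⟪ω, x - x₀⟫)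
    (Real.sqrt (‖x - x₀‖ ^ 2 - ⟪ω, x - x₀⟫ ^ 2)) hs (Real.sqrt_pos.mpr hQ)
    (Real.sq_sqrt hQ.le) (fun j => (x - x₀) j) (fun j => ω j) ?_ ?_ ?_
  · rw [sum_mul_self_eq, real_inner_self_eq_norm_sq]
  · rw [sum_mul_self_eq]
  · rw [sum_mul_self_eq, real_inner_self_eq_norm_sq, hω, one_pow]

end Eikonal

lemma pd_sub {n : ℕ} {j : Fin n} {f g : En n → ℂ} {x : En n}
    (hf : DifferentiableAt ℝ f x) (hg : DifferentiableAt ℝ g x) :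
    pd j (fun y => f y - g y) x = pd j f x - pd j g x := by
  rw [pd, fderiv_fun_sub hf hg]; rfl

lemma diffAt_div_const {n : ℕ} {f : En n → ℂ} {x : En n} (c : ℂ)
    (hf : DifferentiableAt ℝ f x) : DifferentiableAt ℝ (fun y => f y / c) x := by
  simp only [div_eq_mul_inv]
  exact hf.mul (differentiableAt_const _)

lemma diffAt_ofReal {f : En n → ℝ} {x : En n} (hf : DifferentiableAt ℝ f x) :
    DifferentiableAt ℝ (fun y => ((f y : ℝ) : ℂ)) x :=
  Complex.ofRealCLM.differentiableAt.comp x hf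


set_option maxHeartbeats 2000000 in
/-- **WKB construction.** If `Φ` solves
`(∇φ + i∇ψ)·∇Φ + i(∇φ + i∇ψ)·A + (1/2)Δ(φ + iψ) = 0` on `Ω`, then `a = e^Φ` satisfies
the transport equation `(D+A)·((∇ψ - i∇φ)a) + (∇ψ - i∇φ)·(D+A)a = 0`, and
`h² L_{A,q}(e^{(φ+iψ)/h} e^Φ) = O(h²) e^{φ/h}` in `L²(Ω)`. -/
theorem wkb_transport_and_remainder {n : ℕ} (hn : 3 ≤ n)
    (Ω V : Set (En n)) (hΩo : IsOpen Ω) (hΩb : Bornology.IsBounded Ω)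
    (hVo : IsOpen V) (hΩV : closure Ω ⊆ V)
    (x₀ : En n) (hx₀ : x₀ ∉ closure (convexHull ℝ Ω))
    (ω : En n) (hω : ‖ω‖ = 1)
    (hdir : ∀ x ∈ V, x ≠ x₀ ∧ ‖x - x₀‖⁻¹ • (x - x₀) ≠ ω ∧ ‖x - x₀‖⁻¹ • (x - x₀) ≠ -ω)
    (A : En n → En n) (hA : ContDiffOn ℝ 2 A V)
    (q : En n → ℂ) (hq : ∃ M, ∀ x ∈ Ω, ‖q x‖ ≤ M) (hqm : Measurable q)
    -- `φ(x) = log|x-x₀|`, `ψ(x) = d_{S^{n-1}}((x-x₀)/|x-x₀|, ω)`: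
    (φ ψ : En n → ℝ)
    (hφdef : ∀ x ∈ V, φ x = Real.log ‖x - x₀‖)
    (hψdef : ∀ x ∈ V, ψ x = Real.pi / 2 -
      Real.arctan (⟪ω, x - x₀⟫ / Real.sqrt (‖x - x₀‖ ^ 2 - ⟪ω, x - x₀⟫ ^ 2)))
    (Φ : En n → ℂ) (hΦ : ContDiffOn ℝ 2 Φ V)
    (hΦeq : ∀ x ∈ Ω,
      (∑ j, ((pdR j φ x : ℂ) + I * (pdR j ψ x : ℂ)) * pd j Φ x)
        + I * (∑ j, ((pdR j φ x : ℂ) + I * (pdR j ψ x : ℂ)) * (A x j : ℂ))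
        + (1 / 2) * (∑ j, ((pdR j (pdR j φ) x : ℂ) + I * (pdR j (pdR j ψ) x : ℂ))) = 0) :
    -- the transport equation for `a = e^Φ`:
    (∀ x ∈ Ω,
      (∑ j, (-I * pd j (fun y => ((pdR j ψ y : ℂ) - I * (pdR j φ y : ℂ)) * Complex.exp (Φ y)) x
          + (A x j : ℂ) * ((pdR j ψ x : ℂ) - I * (pdR j φ x : ℂ)) * Complex.exp (Φ x)
          + ((pdR j ψ x : ℂ) - I * (pdR j φ x : ℂ))
              * (-I * pd j (fun y => Complex.exp (Φ y)) x + (A x j : ℂ) * Complex.exp (Φ x))))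
        = 0) ∧
    -- `h² L_{A,q}(e^{(φ+iψ)/h} e^Φ) = O(h²) e^{φ/h}` in `L²(Ω)`:
    (∃ C > (0 : ℝ), ∃ h₀ > (0 : ℝ), ∀ h : ℝ, 0 < h → h ≤ h₀ →
      Real.sqrt (∫ x in Ω, Real.exp (-(2 * φ x) / h)
          * ‖(h : ℂ) ^ 2 * Lmag A q
              (fun y => Complex.exp (((φ y : ℂ) + I * (ψ y : ℂ)) / h) * Complex.exp (Φ y)) x‖ ^ 2)
        ≤ C * h ^ 2) := by
  classical
  have hΩV' : Ω ⊆ V := subset_closure.trans hΩV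
  have hVpt : ∀ x ∈ V, x ≠ x₀ ∧ 0 < ‖x - x₀‖ ^ 2 - ⟪ω, x - x₀⟫ ^ 2 := by
    intro x hx
    obtain ⟨h1, h2, h3⟩ := hdir x hx
    exact ⟨h1, strictCS x₀ ω hω x h1 h2 h3⟩
  -- smoothness of φ, ψ on V
  have hφC : ContDiffOn ℝ 3 φ V := by
    intro x hx
    refine ((contDiffAt_lognorm x₀ x (hVpt x hx).1).congr_of_eventuallyEq ?_).contDiffWithinAt
    filter_upwards [hVo.mem_nhds hx] with y hy using hφdef y hy
  have hψC : ContDiffOn ℝ 3 ψ V := by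
    intro x hx
    refine ((contDiffAt_psifun x₀ ω x (hVpt x hx).2).congr_of_eventuallyEq ?_).contDiffWithinAt
    filter_upwards [hVo.mem_nhds hx] with y hy using hψdef y hy
  -- derivative values on V
  have hφval : ∀ x ∈ V, ∀ j, pdR j φ x = (x - x₀) j / ‖x - x₀‖ ^ 2 := by
    intro x hx j
    have hD : HasFDerivAt φ ((‖x - x₀‖ ^ 2)⁻¹ • innerSL ℝ (x - x₀)) x := by
      refine (hasFDerivAt_lognorm x₀ x (hVpt x hx).1).congr_of_eventuallyEq ?_
      filter_upwards [hVo.mem_nhds hx] with y hy using hφdef y hy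
    simp only [pdR, hD.fderiv, ContinuousLinearMap.coe_smul', Pi.smul_apply,
      innerSL_apply_apply, smul_eq_mul]
    rw [inner_single_one]
    ring
  have hψval : ∀ x ∈ V, ∀ j, pdR j ψ x = ⟪ω, x - x₀⟫ * (x - x₀) j
      / (‖x - x₀‖ ^ 2 * Real.sqrt (‖x - x₀‖ ^ 2 - ⟪ω, x - x₀⟫ ^ 2))
      - ω j / Real.sqrt (‖x - x₀‖ ^ 2 - ⟪ω, x - x₀⟫ ^ 2) := by
    intro x hx j
    have hD : HasFDerivAt ψ
        ((⟪ω, x - x₀⟫ / (‖x - x₀‖ ^ 2 * Real.sqrt (‖x - x₀‖ ^ 2 - ⟪ω, x - x₀⟫ ^ 2)))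
            • innerSL ℝ (x - x₀)
          - (Real.sqrt (‖x - x₀‖ ^ 2 - ⟪ω, x - x₀⟫ ^ 2))⁻¹ • innerSL ℝ ω) x := by
      refine (hasFDerivAt_psi x₀ ω x (hVpt x hx).2).congr_of_eventuallyEq ?_
      filter_upwards [hVo.mem_nhds hx] with y hy using hψdef y hy
    simp only [pdR, hD.fderiv, ContinuousLinearMap.coe_sub', Pi.sub_apply,
      ContinuousLinearMap.coe_smul', Pi.smul_apply, innerSL_apply_apply, smul_eq_mul]
    rw [inner_single_one, inner_single_one]
    ring
  -- first derivatives are C² resp. C¹ on V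
  have hφ'C : ∀ j : Fin n, ContDiffOn ℝ 2 (fun y => pdR j φ y) V := by
    intro j
    have h1 : ContDiffOn ℝ 2 (fderiv ℝ φ) V := hφC.fderiv_of_isOpen hVo (by norm_num)
    exact h1.clm_apply contDiffOn_const
  have hψ'C : ∀ j : Fin n, ContDiffOn ℝ 2 (fun y => pdR j ψ y) V := by
    intro j
    have h1 : ContDiffOn ℝ 2 (fderiv ℝ ψ) V := hψC.fderiv_of_isOpen hVo (by norm_num)
    exact h1.clm_apply contDiffOn_const
  have hΦ'C : ∀ j : Fin n, ContDiffOn ℝ 1 (fun y => pd j Φ y) V := by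
    intro j
    have h1 : ContDiffOn ℝ 1 (fderiv ℝ Φ) V := hΦ.fderiv_of_isOpen hVo (by norm_num)
    exact h1.clm_apply contDiffOn_const
  have hAjC : ∀ j : Fin n, ContDiffOn ℝ 2 (fun y => A y j) V := by
    intro j
    exact (EuclideanSpace.proj (𝕜 := ℝ) j).contDiff.comp_contDiffOn hA
  -- pointwise differentiability
  have hmem : ∀ x ∈ V, V ∈ nhds x := fun x hx => hVo.mem_nhds hx
  have hφd : ∀ x ∈ V, DifferentiableAt ℝ φ x := fun x hx =>
    ((hφC.differentiableOn (by norm_num)) x hx).differentiableAt (hmem x hx)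
  have hψd : ∀ x ∈ V, DifferentiableAt ℝ ψ x := fun x hx =>
    ((hψC.differentiableOn (by norm_num)) x hx).differentiableAt (hmem x hx)
  have hΦd : ∀ x ∈ V, DifferentiableAt ℝ Φ x := fun x hx =>
    ((hΦ.differentiableOn (by norm_num)) x hx).differentiableAt (hmem x hx)
  have hφ'd : ∀ x ∈ V, ∀ j, DifferentiableAt ℝ (fun y => pdR j φ y) x := fun x hx j =>
    (((hφ'C j).differentiableOn (by norm_num)) x hx).differentiableAt (hmem x hx)
  have hψ'd : ∀ x ∈ V, ∀ j, DifferentiableAt ℝ (fun y => pdR j ψ y) x := fun x hx j =>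
    (((hψ'C j).differentiableOn (by norm_num)) x hx).differentiableAt (hmem x hx)
  have hΦ'd : ∀ x ∈ V, ∀ j, DifferentiableAt ℝ (fun y => pd j Φ y) x := fun x hx j =>
    (((hΦ'C j).differentiableOn (by norm_num)) x hx).differentiableAt (hmem x hx)
  constructor
  · -- transport equation
    intro x hxΩ
    have hxV : x ∈ V := hΩV' hxΩ
    have hTr := hΦeq x hxΩ
    have hterm : ∀ j : Fin n,
        (-I * pd j (fun y => ((pdR j ψ y : ℂ) - I * (pdR j φ y : ℂ)) * Complex.exp (Φ y)) x
          + (A x j : ℂ) * ((pdR j ψ x : ℂ) - I * (pdR j φ x : ℂ)) * Complex.exp (Φ x)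
          + ((pdR j ψ x : ℂ) - I * (pdR j φ x : ℂ))
              * (-I * pd j (fun y => Complex.exp (Φ y)) x + (A x j : ℂ) * Complex.exp (Φ x)))
        = (-2 * Complex.exp (Φ x)) *
            (((pdR j φ x : ℂ) + I * (pdR j ψ x : ℂ)) * pd j Φ x
              + I * (((pdR j φ x : ℂ) + I * (pdR j ψ x : ℂ)) * (A x j : ℂ))
              + (1/2) * ((pdR j (pdR j φ) x : ℂ) + I * (pdR j (pdR j ψ) x : ℂ))) := by
      intro j
      have hf1 : DifferentiableAt ℝ (fun y => ((pdR j ψ y : ℂ) - I * (pdR j φ y : ℂ))) x :=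
        (diffAt_ofReal (hψ'd x hxV j)).sub
          ((differentiableAt_const I).mul (diffAt_ofReal (hφ'd x hxV j)))
      have hexp : DifferentiableAt ℝ (fun y => Complex.exp (Φ y)) x :=
        Complex.differentiable_exp.differentiableAt.comp x (hΦd x hxV)
      rw [pd_mul hf1 hexp, pd_exp (hΦd x hxV),
        pd_sub (diffAt_ofReal (hψ'd x hxV j))
          ((differentiableAt_const I).fun_mul (diffAt_ofReal (hφ'd x hxV j))),
        pd_const_mul I (diffAt_ofReal (hφ'd x hxV j)),
        pd_ofReal (hψ'd x hxV j), pd_ofReal (hφ'd x hxV j)]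
      linear_combination ((pdR j (pdR j φ) x : ℂ) * Complex.exp (Φ x)
        + 2 * (pdR j φ x : ℂ) * Complex.exp (Φ x) * pd j Φ x
        + 2 * (A x j : ℂ) * (pdR j ψ x : ℂ) * Complex.exp (Φ x)) * Complex.I_sq
    calc (∑ j, (-I * pd j (fun y => ((pdR j ψ y : ℂ) - I * (pdR j φ y : ℂ)) * Complex.exp (Φ y)) x
          + (A x j : ℂ) * ((pdR j ψ x : ℂ) - I * (pdR j φ x : ℂ)) * Complex.exp (Φ x)
          + ((pdR j ψ x : ℂ) - I * (pdR j φ x : ℂ))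
              * (-I * pd j (fun y => Complex.exp (Φ y)) x + (A x j : ℂ) * Complex.exp (Φ x))))
        = ∑ j, (-2 * Complex.exp (Φ x)) *
            (((pdR j φ x : ℂ) + I * (pdR j ψ x : ℂ)) * pd j Φ x
              + I * (((pdR j φ x : ℂ) + I * (pdR j ψ x : ℂ)) * (A x j : ℂ))
              + (1/2) * ((pdR j (pdR j φ) x : ℂ) + I * (pdR j (pdR j ψ) x : ℂ))) :=
          Finset.sum_congr rfl (fun j _ => hterm j)
      _ = (-2 * Complex.exp (Φ x)) *
            ((∑ j, ((pdR j φ x : ℂ) + I * (pdR j ψ x : ℂ)) * pd j Φ x)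
              + I * (∑ j, ((pdR j φ x : ℂ) + I * (pdR j ψ x : ℂ)) * (A x j : ℂ))
              + (1/2) * (∑ j, ((pdR j (pdR j φ) x : ℂ) + I * (pdR j (pdR j ψ) x : ℂ)))) := by
          rw [← Finset.mul_sum]
          congr 1
          rw [Finset.sum_add_distrib, Finset.sum_add_distrib, ← Finset.mul_sum, ← Finset.mul_sum]
      _ = 0 := by rw [hTr, mul_zero]
  · -- the L² estimate
    -- continuity data on V
    have hpdΦcont : ∀ j : Fin n, ContinuousOn (fun y => pd j Φ y) V := fun j =>
      (hΦ'C j).continuousOn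
    have hpd2Φcont : ∀ j : Fin n, ContinuousOn (fun y => pd j (fun z => pd j Φ z) y) V := by
      intro j
      have h1 : ContDiffOn ℝ 0 (fderiv ℝ (fun y => pd j Φ y)) V :=
        (hΦ'C j).fderiv_of_isOpen hVo (by norm_num)
      exact (h1.clm_apply contDiffOn_const).continuousOn
    have hA'cont : ∀ j : Fin n, ContinuousOn (fun y => (pdR j (fun z => A z j) y : ℝ)) V := by
      intro j
      have h1 : ContDiffOn ℝ 1 (fderiv ℝ (fun z => A z j)) V :=
        (hAjC j).fderiv_of_isOpen hVo (by norm_num)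
      exact (h1.clm_apply contDiffOn_const).continuousOn
    set R0 : En n → ℂ := fun y => -(∑ j, (pd j Φ y) ^ 2)
      - (∑ j, pd j (fun z => pd j Φ z) y)
      - 2 * I * (∑ j, (A y j : ℂ) * pd j Φ y)
      - I * (∑ j, (pdR j (fun z => A z j) y : ℂ))
      + ((∑ j, (A y j) ^ 2 : ℝ) : ℂ) with hR0_def
    have hR0cont : ContinuousOn R0 V := by
      apply ContinuousOn.add
      apply ContinuousOn.sub
      apply ContinuousOn.sub
      apply ContinuousOn.sub
      · exact (continuousOn_finset_sum _ (fun j _ => (hpdΦcont j).pow 2)).neg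
      · exact continuousOn_finset_sum _ (fun j _ => hpd2Φcont j)
      · exact continuousOn_const.mul (continuousOn_finset_sum _ (fun j _ =>
          (Complex.continuous_ofReal.comp_continuousOn (hAjC j).continuousOn).mul (hpdΦcont j)))
      · exact continuousOn_const.mul (continuousOn_finset_sum _ (fun j _ =>
          Complex.continuous_ofReal.comp_continuousOn (hA'cont j)))
      · exact Complex.continuous_ofReal.comp_continuousOn
          (continuousOn_finset_sum _ (fun j _ => ((hAjC j).continuousOn.pow 2)))
    have hKc : IsCompact (closure Ω) := hΩb.isCompact_closure
    obtain ⟨C0, hC0⟩ := hKc.exists_bound_of_continuousOn (hR0cont.mono hΩV)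
    have hgcont : ContinuousOn (fun y => Real.exp (Φ y).re) V :=
      Real.continuous_exp.comp_continuousOn (Complex.continuous_re.comp_continuousOn hΦ.continuousOn)
    obtain ⟨C1, hC1⟩ := hKc.exists_bound_of_continuousOn (hgcont.mono hΩV)
    obtain ⟨M, hM⟩ := hq
    set B : ℝ := (max C1 0 * (max C0 0 + max M 0)) ^ 2 with hB_def
    have hB : 0 ≤ B := sq_nonneg _
    have hμ : volume Ω < ⊤ := lt_of_le_of_lt (measure_mono subset_closure) hKc.measure_lt_top
    refine ⟨Real.sqrt (B * (volume Ω).toReal) + 1, by positivity, 1, one_pos, ?_⟩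
    intro h hh hh1
    have hCne : ((h : ℝ) : ℂ) ≠ 0 := by exact_mod_cast hh.ne'
    set u : En n → ℂ := fun y =>
      Complex.exp (((φ y : ℂ) + I * (ψ y : ℂ)) / h) * Complex.exp (Φ y) with hu_def
    -- first derivative of u on V
    have hσd : ∀ x ∈ V, DifferentiableAt ℝ (fun y => (((φ y : ℂ) + I * (ψ y : ℂ)) / h)) x := by
      intro x hx
      have h1 : DifferentiableAt ℝ (fun y => ((φ y : ℂ) + I * (ψ y : ℂ))) x :=
        (diffAt_ofReal (hφd x hx)).add
          ((differentiableAt_const I).mul (diffAt_ofReal (hψd x hx)))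
      exact diffAt_div_const _ h1
    have hexp1 : ∀ x ∈ V, DifferentiableAt ℝ
        (fun y => Complex.exp (((φ y : ℂ) + I * (ψ y : ℂ)) / h)) x :=
      fun x hx => Complex.differentiable_exp.differentiableAt.comp x (hσd x hx)
    have hexp2 : ∀ x ∈ V, DifferentiableAt ℝ (fun y => Complex.exp (Φ y)) x :=
      fun x hx => Complex.differentiable_exp.differentiableAt.comp x (hΦd x hx)
    have hud : ∀ x ∈ V, DifferentiableAt ℝ u x := fun x hx =>
      (hexp1 x hx).mul (hexp2 x hx)
    have hu1 : ∀ x ∈ V, ∀ j, pd j u x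
        = u x * (((pdR j φ x : ℂ) + I * (pdR j ψ x : ℂ)) / h + pd j Φ x) := by
      intro x hx j
      rw [hu_def]
      rw [pd_mul (hexp1 x hx) (hexp2 x hx), pd_exp (hσd x hx), pd_exp (hΦd x hx),
        pd_div_const _ ((diffAt_ofReal (hφd x hx)).fun_add
          ((differentiableAt_const I).fun_mul (diffAt_ofReal (hψd x hx)))) ,
        pd_add (diffAt_ofReal (hφd x hx))
          ((differentiableAt_const I).fun_mul (diffAt_ofReal (hψd x hx))),
        pd_const_mul I (diffAt_ofReal (hψd x hx)),
        pd_ofReal (hφd x hx), pd_ofReal (hψd x hx)]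
      ring
    have hcd : ∀ x ∈ V, ∀ j, DifferentiableAt ℝ
        (fun y => (((pdR j φ y : ℂ) + I * (pdR j ψ y : ℂ)) / h + pd j Φ y)) x := by
      intro x hx j
      have h1 : DifferentiableAt ℝ (fun y => ((pdR j φ y : ℂ) + I * (pdR j ψ y : ℂ))) x :=
        (diffAt_ofReal (hφ'd x hx j)).add
          ((differentiableAt_const I).mul (diffAt_ofReal (hψ'd x hx j)))
      exact (diffAt_div_const _ h1).add (hΦ'd x hx j)
    have hu2 : ∀ x ∈ V, ∀ j, pd j (pd j u) x
        = u x * ((((pdR j φ x : ℂ) + I * (pdR j ψ x : ℂ)) / h + pd j Φ x) ^ 2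
          + (((pdR j (pdR j φ) x : ℂ) + I * (pdR j (pdR j ψ) x : ℂ)) / h
            + pd j (fun z => pd j Φ z) x)) := by
      intro x hx j
      have hEq : (fun y => pd j u y) =ᶠ[nhds x]
          (fun y => u y * (((pdR j φ y : ℂ) + I * (pdR j ψ y : ℂ)) / h + pd j Φ y)) := by
        filter_upwards [hmem x hx] with y hy using hu1 y hy j
      rw [pd_congr hEq, pd_mul (hud x hx) (hcd x hx j), hu1 x hx j,
        pd_add (diffAt_div_const _ ((diffAt_ofReal (hφ'd x hx j)).fun_add
          ((differentiableAt_const I).fun_mul (diffAt_ofReal (hψ'd x hx j)))))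
          (hΦ'd x hx j),
        pd_div_const _ ((diffAt_ofReal (hφ'd x hx j)).fun_add
          ((differentiableAt_const I).fun_mul (diffAt_ofReal (hψ'd x hx j)))),
        pd_add (diffAt_ofReal (hφ'd x hx j))
          ((differentiableAt_const I).fun_mul (diffAt_ofReal (hψ'd x hx j))),
        pd_const_mul I (diffAt_ofReal (hψ'd x hx j)),
        pd_ofReal (hφ'd x hx j), pd_ofReal (hψ'd x hx j)]
      ring
    -- the key pointwise identity
    have hKey : ∀ x ∈ Ω, (h : ℂ) ^ 2 * Lmag A q u x = (h : ℂ) ^ 2 * (u x * (R0 x + q x)) := by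
      intro x hxΩ
      have hxV : x ∈ V := hΩV' hxΩ
      have hTr := hΦeq x hxΩ
      have hEik : (∑ j, ((pdR j φ x : ℂ) + I * (pdR j ψ x : ℂ)) ^ 2) = 0 := by
        calc ∑ j, ((pdR j φ x : ℂ) + I * (pdR j ψ x : ℂ)) ^ 2
            = ∑ j, ((((x - x₀) j / ‖x - x₀‖ ^ 2 : ℝ) : ℂ)
              + I * ((⟪ω, x - x₀⟫ * (x - x₀) j
                  / (‖x - x₀‖ ^ 2 * Real.sqrt (‖x - x₀‖ ^ 2 - ⟪ω, x - x₀⟫ ^ 2))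
                - ω j / Real.sqrt (‖x - x₀‖ ^ 2 - ⟪ω, x - x₀⟫ ^ 2) : ℝ) : ℂ)) ^ 2 :=
              Finset.sum_congr rfl (fun j _ => by rw [hφval x hxV j, hψval x hxV j])
          _ = 0 := eikonal x₀ ω hω x (hVpt x hxV).1 (hVpt x hxV).2
      have H1 : (h : ℂ) ^ 2 * (∑ j, pd j (pd j u) x)
          = u x * ((∑ j, ((pdR j φ x : ℂ) + I * (pdR j ψ x : ℂ)) ^ 2)
            + 2 * h * (∑ j, ((pdR j φ x : ℂ) + I * (pdR j ψ x : ℂ)) * pd j Φ x)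
            + h ^ 2 * (∑ j, (pd j Φ x) ^ 2)
            + h * (∑ j, ((pdR j (pdR j φ) x : ℂ) + I * (pdR j (pdR j ψ) x : ℂ)))
            + h ^ 2 * (∑ j, pd j (fun z => pd j Φ z) x)) := by
        calc (h : ℂ) ^ 2 * (∑ j, pd j (pd j u) x)
            = ∑ j, (h : ℂ) ^ 2 * (u x * ((((pdR j φ x : ℂ) + I * (pdR j ψ x : ℂ)) / h
                + pd j Φ x) ^ 2
              + (((pdR j (pdR j φ) x : ℂ) + I * (pdR j (pdR j ψ) x : ℂ)) / h
                + pd j (fun z => pd j Φ z) x))) := by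
              rw [Finset.mul_sum]
              exact Finset.sum_congr rfl (fun j _ => by rw [hu2 x hxV j])
          _ = ∑ j, (u x * (((pdR j φ x : ℂ) + I * (pdR j ψ x : ℂ)) ^ 2)
              + 2 * h * (u x * (((pdR j φ x : ℂ) + I * (pdR j ψ x : ℂ)) * pd j Φ x))
              + h ^ 2 * (u x * (pd j Φ x) ^ 2)
              + h * (u x * ((pdR j (pdR j φ) x : ℂ) + I * (pdR j (pdR j ψ) x : ℂ)))
              + h ^ 2 * (u x * pd j (fun z => pd j Φ z) x)) :=
              Finset.sum_congr rfl (fun j _ => by field_simp; ring)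
          _ = _ := by
              simp only [Finset.sum_add_distrib, ← Finset.mul_sum]
              ring
      have H2 : (h : ℂ) * (∑ j, (A x j : ℂ) * pd j u x)
          = u x * ((∑ j, ((pdR j φ x : ℂ) + I * (pdR j ψ x : ℂ)) * (A x j : ℂ))
            + h * (∑ j, (A x j : ℂ) * pd j Φ x)) := by
        calc (h : ℂ) * (∑ j, (A x j : ℂ) * pd j u x)
            = ∑ j, (h : ℂ) * ((A x j : ℂ)
                * (u x * (((pdR j φ x : ℂ) + I * (pdR j ψ x : ℂ)) / h + pd j Φ x))) := by
              rw [Finset.mul_sum]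
              exact Finset.sum_congr rfl (fun j _ => by rw [hu1 x hxV j])
          _ = ∑ j, (u x * (((pdR j φ x : ℂ) + I * (pdR j ψ x : ℂ)) * (A x j : ℂ))
              + h * (u x * ((A x j : ℂ) * pd j Φ x))) :=
              Finset.sum_congr rfl (fun j _ => by field_simp)
          _ = _ := by
              simp only [Finset.sum_add_distrib, ← Finset.mul_sum]
              ring
      simp only [Lmag, hR0_def]
      linear_combination (-1 : ℂ) * H1 + (-2 * I * (h : ℂ)) * H2 + (-(u x)) * hEik
        + (-2 * (h : ℂ) * (u x)) * hTr
    -- norm identities and bounds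
    have hnormu : ∀ x ∈ Ω, ‖u x‖ = Real.exp (φ x / h) * Real.exp ((Φ x).re) := by
      intro x hxΩ
      rw [hu_def]
      rw [norm_mul, Complex.norm_exp, Complex.norm_exp]
      congr 2
      rw [Complex.div_ofReal_re]
      simp
    have hptineq : ∀ x ∈ Ω, Real.exp (-(2 * φ x) / h) * ‖(h : ℂ) ^ 2 * Lmag A q u x‖ ^ 2
        ≤ B * h ^ 4 := by
      intro x hxΩ
      have hxK : x ∈ closure Ω := subset_closure hxΩ
      have e1 : ‖(h : ℂ) ^ 2 * Lmag A q u x‖ = h ^ 2 * (‖u x‖ * ‖R0 x + q x‖) := by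
        rw [hKey x hxΩ, norm_mul, norm_mul, norm_pow, Complex.norm_real, Real.norm_eq_abs, abs_of_pos hh]
      have hexp1eq : Real.exp (-(2 * φ x) / h) * Real.exp (φ x / h) ^ 2 = 1 := by
        rw [sq, ← Real.exp_add, ← Real.exp_add,
          show -(2 * φ x) / h + (φ x / h + φ x / h) = 0 by ring, Real.exp_zero]
      have b1 : Real.exp ((Φ x).re) ≤ max C1 0 := by
        have := hC1 x hxK
        rw [Real.norm_eq_abs] at this
        exact le_trans (le_abs_self _) (this.trans (le_max_left _ _))
      have b2 : ‖R0 x + q x‖ ≤ max C0 0 + max M 0 :=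
        (norm_add_le _ _).trans (add_le_add ((hC0 x hxK).trans (le_max_left _ _))
          ((hM x hxΩ).trans (le_max_left _ _)))
      calc Real.exp (-(2 * φ x) / h) * ‖(h : ℂ) ^ 2 * Lmag A q u x‖ ^ 2
          = Real.exp (-(2 * φ x) / h)
              * (h ^ 2 * ((Real.exp (φ x / h) * Real.exp ((Φ x).re)) * ‖R0 x + q x‖)) ^ 2 := by
            rw [e1, hnormu x hxΩ]
        _ = (Real.exp (-(2 * φ x) / h) * Real.exp (φ x / h) ^ 2)
              * (h ^ 4 * (Real.exp ((Φ x).re) * ‖R0 x + q x‖) ^ 2) := by ring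
        _ = h ^ 4 * (Real.exp ((Φ x).re) * ‖R0 x + q x‖) ^ 2 := by rw [hexp1eq, one_mul]
        _ ≤ h ^ 4 * (max C1 0 * (max C0 0 + max M 0)) ^ 2 := by
            have hle2 : (Real.exp ((Φ x).re) * ‖R0 x + q x‖) ^ 2
                ≤ (max C1 0 * (max C0 0 + max M 0)) ^ 2 := by
              apply pow_le_pow_left₀ (by positivity)
              exact mul_le_mul b1 b2 (norm_nonneg _) (le_max_right _ _)
            nlinarith [pow_nonneg hh.le 4]
        _ = B * h ^ 4 := by rw [hB_def]; ring
    set f : En n → ℝ := fun x =>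
      Real.exp (-(2 * φ x) / h) * ‖(h : ℂ) ^ 2 * Lmag A q u x‖ ^ 2 with hf_def
    by_cases hint : IntegrableOn f Ω volume
    · have hle : ∫ x in Ω, f x ≤ ∫ _x in Ω, (B * h ^ 4 : ℝ) := by
        refine setIntegral_mono_on hint (integrableOn_const hμ.ne)
          hΩo.measurableSet ?_
        intro x hx
        exact hptineq x hx
      have hconst : ∫ _x in Ω, (B * h ^ 4 : ℝ) = (volume Ω).toReal * (B * h ^ 4) := by
        rw [setIntegral_const, smul_eq_mul]; rfl
      refine le_trans (Real.sqrt_le_sqrt (hle.trans (le_of_eq hconst))) ?_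
      rw [show (volume Ω).toReal * (B * h ^ 4) = (B * (volume Ω).toReal) * (h ^ 2) ^ 2 by ring,
        Real.sqrt_mul (by positivity), Real.sqrt_sq (by positivity)]
      have hs := Real.sqrt_nonneg (B * (volume Ω).toReal)
      nlinarith [pow_pos hh 2]
    · rw [integral_undef hint, Real.sqrt_zero]
      positivity
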